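/- Let H be a group of automorphisms of a graph Γ with vertex set V, let σ ∈ V, and let R ⊆ V. Suppose that for every σ' in the orbit S = Hσ there is a σ'-projection Π_{σ'} for which R is Π_{σ'}-convex, and that the family {Π_{σ'}}_{σ'∈S} is H-equivariant. Then the set T = HR = {hρ : h ∈ H, ρ ∈ R} is Π_σ-convex. -/

import Mathlib

open SimpleGraph

variable {V : Type*}

/-- The closed neighbourhood of a vertex: the vertex together with all its neighbours. -/
def closedNbhd (G : SimpleGraph V) (ρ : V) : Set V := insert ρ {w | G.Adj ρ w}

/-- `ρ` is dominated by `π` within the subgraph of `G` induced on `S`: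
`π ∈ S`, `π ≠ ρ`, and `N(ρ) ∩ S ⊆ N(π)`. -/
def DominatedIn (G : SimpleGraph V) (S : Set V) (ρ π : V) : Prop :=
  π ∈ S ∧ π ≠ ρ ∧ ∀ w ∈ S, w ∈ closedNbhd G ρ → w ∈ closedNbhd G π

/-- The subgraph of `G` induced on `S` is dismantlable: the vertices of `S` can be
arranged in a (finite) list such that each vertex except the last is dominated in the
subgraph induced on it and the later vertices. -/
def DismantlableOn (G : SimpleGraph V) (S : Set V) : Prop :=
  ∃ l : List V, l.Nodup ∧ (∀ v, v ∈ l ↔ v ∈ S) ∧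
    ∀ (i : ℕ) (h : i < l.length), i < l.length - 1 →
      ∃ π, DominatedIn G {w | w ∈ l.drop i} (l[i]'h) π

/-- A graph is dismantlable if the subgraph induced on all of its vertices is. -/
def Dismantlable (G : SimpleGraph V) : Prop := DismantlableOn G Set.univ

/-- The set `Π*(ρ)` of all vertices appearing in pairs of `Π ρ`. -/
def PiStar (Pr : V → Finset (Sym2 V)) (ρ : V) : Set V := {v | ∃ p ∈ Pr ρ, v ∈ p}

/-- `Pr` is a `σ`-projection: it assigns to each vertex `ρ ≠ σ` a nonempty finite set of
unordered pairs of vertices such that (i) every finite set `R` containing a vertex other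
than `σ` has an exposed vertex, and (ii) there is no cycle `ρ₀, …, ρ_{m-1}` with
`ρ_{i+1} ∈ Π*(ρ_i)` (indices mod `m`). -/
structure IsSigmaProjection (G : SimpleGraph V) (σ : V) (Pr : V → Finset (Sym2 V)) : Prop where
  nonempty : ∀ ρ, ρ ≠ σ → (Pr ρ).Nonempty
  exposed : ∀ R : Finset V, (∃ ρ ∈ R, ρ ≠ σ) →
    ∃ ρ ∈ R, ρ ≠ σ ∧ ∃ p ∈ Pr ρ, ∀ π ∈ p,
      ∀ w ∈ R, w ∈ closedNbhd G ρ → w ∈ closedNbhd G π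
  acyclic : ¬ ∃ m : ℕ, 0 < m ∧ ∃ f : ZMod m → V,
    ∀ i, f i ≠ σ ∧ f (i + 1) ∈ PiStar Pr (f i)

/-- `R` is `Π`-convex: for every `ρ ∈ R` other than `σ`, each pair in `Π ρ` meets `R`. -/
def PiConvex (σ : V) (Pr : V → Finset (Sym2 V)) (R : Set V) : Prop :=
  ∀ ρ ∈ R, ρ ≠ σ → ∀ p ∈ Pr ρ, ∃ v ∈ p, v ∈ R

/-- The orbit `HR` of a set `R` under a group action. -/
def orbitSet (H : Type*) [Group H] [MulAction H V] (R : Set V) : Set V :=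
  {x | ∃ h : H, ∃ ρ ∈ R, x = h • ρ}

/-- The geometric realization of the flag complex of `G` inside `ℝ^V`: the union over
all (nonempty) cliques of the convex hulls of the corresponding standard basis vectors. -/
def flagRealization [DecidableEq V] (G : SimpleGraph V) : Set (V → ℝ) :=
  ⋃ (Δ : Set V) (_ : Δ.Nonempty) (_ : G.IsClique Δ),
    convexHull ℝ ((fun v => (Pi.single v 1 : V → ℝ)) '' Δ)

/-- A walk is a geodesic if its length equals the distance between its endpoints. -/
def IsGeodesic (G : SimpleGraph V) {u v : V} (p : G.Walk u v) : Prop :=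
  p.length = G.dist u v

/-- `G` is `δ`-hyperbolic: for any geodesic triangle, each vertex on one side is within
distance `δ` of some vertex on the union of the other two sides. -/
def Hyperbolic (G : SimpleGraph V) (δ : ℕ) : Prop :=
  ∀ (u v w : V) (p : G.Walk u v) (q : G.Walk v w) (r : G.Walk w u),
    IsGeodesic G p → IsGeodesic G q → IsGeodesic G r →
    ∀ t ∈ p.support, ∃ s, (s ∈ q.support ∨ s ∈ r.support) ∧ G.dist t s ≤ δ

/-- The Rips graph `Γ_D`: same vertices, two distinct vertices adjacent iff their
graph distance in `G` is at most `D`. -/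
def ripsGraph (G : SimpleGraph V) (D : ℕ) : SimpleGraph V where
  Adj u v := u ≠ v ∧ G.dist u v ≤ D
  symm := by
    constructor
    intro u v h
    exact ⟨h.1.symm, by rw [SimpleGraph.dist_comm]; exact h.2⟩
  loopless := by
    constructor
    intro v h
    exact h.1 rfl

/-- The ball of radius `r` around a set `C` of vertices. -/
def ballSet (G : SimpleGraph V) (C : Set V) (r : ℕ) : Set V :=
  {v | ∃ c ∈ C, G.dist v c ≤ r}

/-! `HR` is the union of the translates `hR`. Equivariance carries `Π_{h⁻¹σ}` to `Π_σ`, so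
`Π_{h⁻¹σ}`-convexity of `R` becomes `Π_σ`-convexity of `hR`, and convexity survives unions. -/

open scoped Pointwise

theorem PiConvex.iUnion {ι : Sort*} {σ : V} {Pr : V → Finset (Sym2 V)} {R : ι → Set V}
    (hR : ∀ i, PiConvex σ Pr (R i)) : PiConvex σ Pr (⋃ i, R i) := by
  intro ρ hρ hne p hp
  obtain ⟨i, hρi⟩ := Set.mem_iUnion.mp hρ
  obtain ⟨v, hvp, hvR⟩ := hR i ρ hρi hne p hp
  exact ⟨v, hvp, Set.mem_iUnion.mpr ⟨i, hvR⟩⟩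

theorem orbitSet_eq_iUnion_smul (H : Type*) [Group H] [MulAction H V] (R : Set V) :
    orbitSet H R = ⋃ h : H, h • R := by
  ext x
  simp only [orbitSet, Set.mem_ofPred_eq, Set.mem_iUnion, Set.mem_smul_set, eq_comm]

theorem PiConvex.smul {H : Type*} [Group H] [MulAction H V] [DecidableEq V] {σ : V}
    {Pr Pr' : V → Finset (Sym2 V)} {R : Set V} (hR : PiConvex σ Pr R) (h : H)
    (hequiv : ∀ ρ, ρ ≠ σ → (Pr ρ).image (Sym2.map (fun v => h • v)) = Pr' (h • ρ)) :
    PiConvex (h • σ) Pr' (h • R) := by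
  rintro _ ⟨ρ, hρR, rfl⟩ hne p hp
  have hρσ : ρ ≠ σ := fun e => hne (congrArg (h • ·) e)
  rw [← hequiv ρ hρσ] at hp
  obtain ⟨p₀, hp₀, rfl⟩ := Finset.mem_image.mp hp
  obtain ⟨v, hvp, hvR⟩ := hR ρ hρR hρσ p₀ hp₀
  exact ⟨h • v, Sym2.mem_map.mpr ⟨v, hvp, rfl⟩, Set.smul_mem_smul_set hvR⟩

theorem orbitSet_piConvex {V : Type*} [DecidableEq V] {H : Type*} [Group H] [MulAction H V]
    (σ : V) (R : Set V)
    (Pr : V → V → Finset (Sym2 V))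
    (hconv : ∀ σ' ∈ MulAction.orbit H σ, PiConvex σ' (Pr σ') R)
    (hequiv : ∀ (h : H), ∀ σ' ∈ MulAction.orbit H σ, ∀ ρ, ρ ≠ σ' →
      (Pr σ' ρ).image (Sym2.map (fun v => h • v)) = Pr (h • σ') (h • ρ)) :
    PiConvex σ (Pr σ) (orbitSet H R) := by
  rw [orbitSet_eq_iUnion_smul]
  refine PiConvex.iUnion fun h => ?_
  have hσ' : h⁻¹ • σ ∈ MulAction.orbit H σ := ⟨h⁻¹, rfl⟩
  simpa only [smul_inv_smul] using (hconv _ hσ').smul h (hequiv h _ hσ')
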